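/- arXiv:2405.15267 — 5 statements merged into one kernel-verified Lean document; each statement's English description precedes it below -/
import Mathlib

section
/- Let α be a finite type and f : Finset α → ℝ a set function that is monotone (f A ≤ f B whenever A ⊆ B), submodular (for all A ⊆ B and x ∉ B, f (B ∪ {x}) − f B ≤ f (A ∪ {x}) − f A), and normalized (f ∅ = 0). Fix P ≥ 1 and a greedy chain S₀, S₁, …, S_P of finsets with S₀ = ∅, |Sᵢ| = i, Sᵢ ⊆ Sᵢ₊₁, and the greedy property that for every x ∈ α, f Sᵢ₊₁ ≥ f (Sᵢ ∪ {x}). Then for every finset T with |T| = P one has f S_P ≥ (1 − (1 − 1/P)^P) · f T. In particular the greedy subset attains at least a (1 − (1 − 1/P)^P) fraction of the optimal representativeness r* = max over subsets of size P of f. -/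
lemma submodular_union_sum {α : Type*} [DecidableEq α] (f : Finset α → ℝ)
    (hmono : ∀ A B : Finset α, A ⊆ B → f A ≤ f B)
    (hsub : ∀ A B : Finset α, A ⊆ B → ∀ x ∉ B,
      f (B ∪ {x}) - f B ≤ f (A ∪ {x}) - f A) :
    ∀ (T A : Finset α), f (A ∪ T) ≤ f A + ∑ x ∈ T, (f (A ∪ {x}) - f A) := by
  intro T
  induction T using Finset.induction_on with
  | empty => intro A; simp
  | @insert a s ha ih =>
    intro A
    rw [Finset.sum_insert ha]
    have h1 : A ∪ insert a s = (A ∪ s) ∪ {a} := by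
      ext y; simp [or_comm, or_assoc, or_left_comm]
    by_cases hmem : a ∈ A ∪ s
    · have h2 : (A ∪ s) ∪ {a} = A ∪ s := by
        rw [Finset.union_eq_left]; simpa using hmem
      have h3 : f A ≤ f (A ∪ {a}) := hmono _ _ Finset.subset_union_left
      have := ih A
      rw [h1, h2]; linarith
    · have h4 := hsub A (A ∪ s) Finset.subset_union_left a hmem
      have := ih A
      rw [h1]; linarith

/-- Theorem 1: the greedy chain attains at least a `(1 - (1 - 1/P)^P)` fraction of the
value of any `P`-element subset, for a monotone, submodular, normalized set function. -/
theorem greedy_approximation {α : Type*} [Fintype α] [DecidableEq α] (f : Finset α → ℝ)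
    (hmono : ∀ A B : Finset α, A ⊆ B → f A ≤ f B)
    (hsub : ∀ A B : Finset α, A ⊆ B → ∀ x ∉ B,
      f (B ∪ {x}) - f B ≤ f (A ∪ {x}) - f A)
    (hnorm : f ∅ = 0)
    (P : ℕ) (hP : 1 ≤ P)
    (S : ℕ → Finset α)
    (hS0 : S 0 = ∅)
    (hcard : ∀ i ≤ P, (S i).card = i)
    (hchain : ∀ i < P, S i ⊆ S (i + 1))
    (hgreedy : ∀ i < P, ∀ x : α, f (S i ∪ {x}) ≤ f (S (i + 1)))
    (T : Finset α) (hT : T.card = P) :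
    (1 - (1 - 1 / (P : ℝ)) ^ P) * f T ≤ f (S P) := by
  have hPpos : (0 : ℝ) < P := by exact_mod_cast hP
  have hq0 : (0 : ℝ) ≤ 1 - 1 / (P : ℝ) := by
    have : 1 / (P : ℝ) ≤ 1 := by
      rw [div_le_one hPpos]; exact_mod_cast hP
    linarith
  -- per-step contraction
  have hstep : ∀ i < P, f T - f (S (i + 1)) ≤ (1 - 1 / (P : ℝ)) * (f T - f (S i)) := by
    intro i hi
    have h1 : f T ≤ f (S i ∪ T) := hmono _ _ Finset.subset_union_right
    have h2 := submodular_union_sum f hmono hsub T (S i)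
    have h3 : ∑ x ∈ T, (f (S i ∪ {x}) - f (S i)) ≤
        ∑ x ∈ T, (f (S (i + 1)) - f (S i)) := by
      apply Finset.sum_le_sum
      intro x _
      have := hgreedy i hi x
      linarith
    rw [Finset.sum_const, hT, nsmul_eq_mul] at h3
    have h4 : f T ≤ f (S i) + (P : ℝ) * (f (S (i + 1)) - f (S i)) := by linarith
    have hPne : (P : ℝ) ≠ 0 := ne_of_gt hPpos
    have h5 : (P : ℝ) * (f T - f (S (i + 1))) ≤ ((P : ℝ) - 1) * (f T - f (S i)) := by
      nlinarith [h4]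
    calc f T - f (S (i + 1)) = (P : ℝ) * (f T - f (S (i + 1))) / P := by field_simp
      _ ≤ ((P : ℝ) - 1) * (f T - f (S i)) / P := by gcongr
      _ = (1 - 1 / (P : ℝ)) * (f T - f (S i)) := by field_simp
  -- induction
  have key : ∀ i, i ≤ P → f T - f (S i) ≤ (1 - 1 / (P : ℝ)) ^ i * f T := by
    intro i
    induction i with
    | zero => intro _; simp [hS0, hnorm]
    | succ n ih =>
      intro hn
      have hnP : n < P := hn
      have h1 := hstep n hnP
      have h2 := ih (le_of_lt hnP)
      calc f T - f (S (n + 1)) ≤ (1 - 1 / (P : ℝ)) * (f T - f (S n)) := h1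
        _ ≤ (1 - 1 / (P : ℝ)) * ((1 - 1 / (P : ℝ)) ^ n * f T) := by
            exact mul_le_mul_of_nonneg_left h2 hq0
        _ = (1 - 1 / (P : ℝ)) ^ (n + 1) * f T := by ring
  have := key P le_rfl
  linarith
end

section
/- Let α be a finite type and f : Finset α → ℝ a set function that is monotone (f A ≤ f B whenever A ⊆ B) and submodular (for all A ⊆ B and x ∉ B, f (B ∪ {x}) − f B ≤ f (A ∪ {x}) − f A). Then for any two finsets S and T, f T ≤ f S + ∑_{e ∈ T \ S} (f (S ∪ {e}) − f S). -/
lemma submod_aux {α : Type*} [Fintype α] [DecidableEq α]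
    (f : Finset α → ℝ)
    (hsub : ∀ A B : Finset α, A ⊆ B → ∀ x ∉ B,
      f (B ∪ {x}) - f B ≤ f (A ∪ {x}) - f A)
    (S : Finset α) :
    ∀ D : Finset α, Disjoint D S →
      f (S ∪ D) ≤ f S + ∑ e ∈ D, (f (S ∪ {e}) - f S) := by
  intro D
  induction D using Finset.induction_on with
  | empty => simp
  | @insert x D hx ih =>
    intro hdisj
    have hdisj' : Disjoint D S := (Finset.disjoint_insert_left.mp hdisj).2
    have hxS : x ∉ S := (Finset.disjoint_insert_left.mp hdisj).1
    have hxSD : x ∉ S ∪ D := by simp [hx, hxS]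
    have h1 := hsub S (S ∪ D) Finset.subset_union_left x hxSD
    have h2 := ih hdisj'
    have heq : S ∪ insert x D = (S ∪ D) ∪ {x} := by
      ext a; simp [or_comm, or_assoc, or_left_comm]
    rw [heq, Finset.sum_insert hx]
    linarith

/-- Telescoping upper bound on the value of any set by single-element marginal gains,
for a monotone submodular set function. -/
theorem submodular_telescoping_bound {α : Type*} [Fintype α] [DecidableEq α]
    (f : Finset α → ℝ)
    (hmono : ∀ A B : Finset α, A ⊆ B → f A ≤ f B)
    (hsub : ∀ A B : Finset α, A ⊆ B → ∀ x ∉ B,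
      f (B ∪ {x}) - f B ≤ f (A ∪ {x}) - f A)
    (S T : Finset α) :
    f T ≤ f S + ∑ e ∈ T \ S, (f (S ∪ {e}) - f S) := by
  have h1 : f T ≤ f (S ∪ (T \ S)) := by
    apply hmono
    intro a ha
    by_cases h : a ∈ S <;> simp [h, ha]
  have h2 := submod_aux f hsub S (T \ S) (Finset.sdiff_disjoint)
  linarith
end

section
/- Let α be a finite type and f : Finset α → ℝ a set function that is monotone (f A ≤ f B whenever A ⊆ B) and submodular (for all A ⊆ B and x ∉ B, f (B ∪ {x}) − f B ≤ f (A ∪ {x}) − f A). Let S be a finset and suppose S' satisfies the greedy property f S' ≥ f (S ∪ {x}) for every x ∈ α, together with f S' ≥ f S. Then for every nonempty finset T with |T| = P (P ≥ 1), the per-step gain satisfies f S' − f S ≥ (f T − f S) / P. -/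
/-- Per-iteration gain lemma: a greedy step closes at least a `1/P` fraction of the gap
to the value of any `P`-element set. -/
theorem greedy_step_gain {α : Type*} [Fintype α] [DecidableEq α]
    (f : Finset α → ℝ)
    (hmono : ∀ A B : Finset α, A ⊆ B → f A ≤ f B)
    (hsub : ∀ A B : Finset α, A ⊆ B → ∀ x ∉ B,
      f (B ∪ {x}) - f B ≤ f (A ∪ {x}) - f A)
    (S S' : Finset α)
    (hgreedy : ∀ x : α, f (S ∪ {x}) ≤ f S')
    (hge : f S ≤ f S')
    (P : ℕ) (hP : 1 ≤ P)
    (T : Finset α) (hTne : T.Nonempty) (hT : T.card = P) :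
    (f T - f S) / (P : ℝ) ≤ f S' - f S := by
  have key : ∀ U : Finset α, f (S ∪ U) - f S ≤ (U.card : ℝ) * (f S' - f S) := by
    intro U
    induction U using Finset.induction_on with
    | empty => simp
    | @insert a U ha ih =>
      have step : f (S ∪ insert a U) - f (S ∪ U) ≤ f S' - f S := by
        by_cases h : a ∈ S ∪ U
        · have : S ∪ insert a U = S ∪ U := by
            rw [Finset.union_insert, Finset.insert_eq_self.mpr h]
          rw [this]; simpa using sub_nonneg.mpr hge
        · have h1 := hsub S (S ∪ U) Finset.subset_union_left a h
          have h2 := hgreedy a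
          have : S ∪ insert a U = (S ∪ U) ∪ {a} := by
            ext x; simp [or_comm, or_assoc, or_left_comm]
          rw [this]
          calc f ((S ∪ U) ∪ {a}) - f (S ∪ U) ≤ f (S ∪ {a}) - f S := h1
            _ ≤ f S' - f S := by linarith
      have hc : ((insert a U).card : ℝ) = (U.card : ℝ) + 1 := by
        rw [Finset.card_insert_of_notMem ha]; push_cast; ring
      rw [hc]
      nlinarith [ih]
  have hPpos : (0 : ℝ) < P := by exact_mod_cast hP
  rw [div_le_iff₀ hPpos]
  have h1 : f T ≤ f (S ∪ T) := hmono _ _ Finset.subset_union_right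
  have h2 := key T
  rw [hT] at h2
  nlinarith
end

section
/- Let α be a finite type and f : Finset α → ℝ a set function that is monotone (f A ≤ f B whenever A ⊆ B) and submodular (for all A ⊆ B and x ∉ B, f (B ∪ {x}) − f B ≤ f (A ∪ {x}) − f A). Fix P ≥ 1 and a greedy chain S₀ ⊆ S₁ ⊆ … with S₀ = ∅ such that for every i and every x ∈ α, f Sᵢ₊₁ ≥ f (Sᵢ ∪ {x}) and f Sᵢ₊₁ ≥ f Sᵢ. Then for every finset T with |T| = P and every natural number i, f T − f Sᵢ ≤ (1 − 1/P)^i · (f T − f S₀). -/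
/-- Submodular functions are subadditive on marginals. -/
lemma submod_sum {α : Type*} [DecidableEq α] (f : Finset α → ℝ)
    (hsub : ∀ A B : Finset α, A ⊆ B → ∀ x ∉ B,
      f (B ∪ {x}) - f B ≤ f (A ∪ {x}) - f A)
    (B : Finset α) (R : Finset α) :
    f (B ∪ R) - f B ≤ ∑ x ∈ R, (f (B ∪ {x}) - f B) := by
  induction R using Finset.induction_on with
  | empty => simp
  | @insert x R hx ih =>
    rw [Finset.sum_insert hx]
    have key : f (B ∪ insert x R) - f (B ∪ R) ≤ f (B ∪ {x}) - f B := by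
      by_cases hxB : x ∈ B
      · have h1 : B ∪ insert x R = B ∪ R := by
          ext y; simp [Finset.mem_insert]; intro h; rcases h with rfl|h <;> tauto
        have h2 : B ∪ {x} = B := Finset.union_eq_left.mpr (by simpa using hxB)
        rw [h1, h2]; simp
      · have hxBR : x ∉ B ∪ R := by simp [hxB, hx]
        have := hsub B (B ∪ R) Finset.subset_union_left x hxBR
        have h1 : B ∪ R ∪ {x} = B ∪ insert x R := by
          ext y; simp [Finset.mem_insert]
        rw [h1] at this
        exact this
    linarith

/-- Geometric-decay induction step: after `i` greedy steps the optimality gap to any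
`P`-element set shrinks by a factor `(1 - 1/P)` per step. -/
theorem greedy_geometric_decay {α : Type*} [Fintype α] [DecidableEq α]
    (f : Finset α → ℝ)
    (hmono : ∀ A B : Finset α, A ⊆ B → f A ≤ f B)
    (hsub : ∀ A B : Finset α, A ⊆ B → ∀ x ∉ B,
      f (B ∪ {x}) - f B ≤ f (A ∪ {x}) - f A)
    (P : ℕ) (hP : 1 ≤ P)
    (S : ℕ → Finset α)
    (hS0 : S 0 = ∅)
    (hchain : ∀ i : ℕ, S i ⊆ S (i + 1))
    (hgreedy : ∀ i : ℕ, ∀ x : α, f (S i ∪ {x}) ≤ f (S (i + 1)))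
    (hge : ∀ i : ℕ, f (S i) ≤ f (S (i + 1)))
    (T : Finset α) (hT : T.card = P) (i : ℕ) :
    f T - f (S i) ≤ (1 - 1 / (P : ℝ)) ^ i * (f T - f (S 0)) := by
  have hPpos : (0:ℝ) < P := by exact_mod_cast Nat.lt_of_lt_of_le Nat.zero_lt_one hP
  have hfac : (0:ℝ) ≤ 1 - 1 / (P : ℝ) := by
    rw [sub_nonneg, div_le_one hPpos]; exact_mod_cast hP
  induction i with
  | zero => simp
  | succ i ih =>
    -- key: f T - f (S i) ≤ P * (f (S (i+1)) - f (S i))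
    have key : f T - f (S i) ≤ (P:ℝ) * (f (S (i+1)) - f (S i)) := by
      have h1 : f T ≤ f (S i ∪ (T \ S i)) :=
        hmono T _ (by intro y hy; simp [hy])
      have h2 := submod_sum f hsub (S i) (T \ S i)
      have h3 : ∑ x ∈ T \ S i, (f (S i ∪ {x}) - f (S i))
          ≤ ∑ _x ∈ T \ S i, (f (S (i+1)) - f (S i)) := by
        apply Finset.sum_le_sum
        intro x _
        linarith [hgreedy i x]
      have h4 : ∑ _x ∈ T \ S i, (f (S (i+1)) - f (S i))
          = ((T \ S i).card : ℝ) * (f (S (i+1)) - f (S i)) := by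
        rw [Finset.sum_const, nsmul_eq_mul]
      have h5 : ((T \ S i).card : ℝ) ≤ (P : ℝ) := by
        have := Finset.card_le_card (Finset.sdiff_subset (s := T) (t := S i))
        exact_mod_cast hT ▸ this
      have h6 : (0:ℝ) ≤ f (S (i+1)) - f (S i) := by linarith [hge i]
      calc f T - f (S i) ≤ f (S i ∪ (T \ S i)) - f (S i) := by linarith
        _ ≤ ((T \ S i).card : ℝ) * (f (S (i+1)) - f (S i)) := by rw [← h4]; linarith
        _ ≤ (P:ℝ) * (f (S (i+1)) - f (S i)) := by nlinarith
    have step : f T - f (S (i+1)) ≤ (1 - 1/(P:ℝ)) * (f T - f (S i)) := by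
      have hdiv : (f T - f (S i)) / (P:ℝ) ≤ f (S (i+1)) - f (S i) :=
        (div_le_iff₀ hPpos).mpr (by linarith [mul_comm (P:ℝ) (f (S (i+1)) - f (S i))])
      have h7 : (1 - 1/(P:ℝ)) * (f T - f (S i))
          = (f T - f (S i)) - (f T - f (S i)) / (P:ℝ) := by
        field_simp
      linarith
    calc f T - f (S (i+1)) ≤ (1 - 1/(P:ℝ)) * (f T - f (S i)) := step
      _ ≤ (1 - 1/(P:ℝ)) * ((1 - 1/(P:ℝ))^i * (f T - f (S 0))) :=
          mul_le_mul_of_nonneg_left ih hfac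
      _ = (1 - 1/(P:ℝ))^(i+1) * (f T - f (S 0)) := by ring
end

section
/- Let α be a finite type and f : Finset α → ℝ a set function that is monotone (f A ≤ f B whenever A ⊆ B), submodular (for all A ⊆ B and x ∉ B, f (B ∪ {x}) − f B ≤ f (A ∪ {x}) − f A), and normalized (f ∅ = 0). Fix P ≥ 1 and a greedy chain S₀, S₁, …, S_P with S₀ = ∅, Sᵢ ⊆ Sᵢ₊₁, |Sᵢ| = i, and for every x ∈ α, f Sᵢ₊₁ ≥ f (Sᵢ ∪ {x}). Then for every finset T with |T| = P, f S_P ≥ (1 − 1/e) · f T whenever f T ≥ 0, where e = Real.exp 1. -/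
/-- Submodular marginal-sum bound: adding a disjoint set `D` to `A` gains at most the
sum of single-element gains. -/
lemma submodular_marginal_sum {α : Type*} [DecidableEq α] (f : Finset α → ℝ)
    (hsub : ∀ A B : Finset α, A ⊆ B → ∀ x ∉ B,
      f (B ∪ {x}) - f B ≤ f (A ∪ {x}) - f A) :
    ∀ (D A : Finset α), Disjoint A D →
      f (A ∪ D) - f A ≤ ∑ x ∈ D, (f (A ∪ {x}) - f A) := by
  intro D
  induction D using Finset.induction_on with
  | empty => intro A _; simp
  | @insert y D' hy ih =>
    intro A hdisj
    have hdisj' : Disjoint A D' := hdisj.mono_right (Finset.subset_insert _ _)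
    have hyA : y ∉ A := Finset.disjoint_right.mp hdisj (Finset.mem_insert_self _ _)
    have hyAD : y ∉ A ∪ D' := by simp [hyA, hy]
    have h1 : f ((A ∪ D') ∪ {y}) - f (A ∪ D') ≤ f (A ∪ {y}) - f A :=
      hsub A (A ∪ D') Finset.subset_union_left y hyAD
    have h2 := ih A hdisj'
    have hset : A ∪ insert y D' = (A ∪ D') ∪ {y} := by
      ext a; simp
    rw [Finset.sum_insert hy, hset]
    linarith

/-- The greedy chain attains at least a `(1 - 1/e)` fraction of the value of any
`P`-element subset with nonnegative value, for a monotone, submodular, normalized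
set function. -/
theorem greedy_one_sub_inv_e {α : Type*} [Fintype α] [DecidableEq α] (f : Finset α → ℝ)
    (hmono : ∀ A B : Finset α, A ⊆ B → f A ≤ f B)
    (hsub : ∀ A B : Finset α, A ⊆ B → ∀ x ∉ B,
      f (B ∪ {x}) - f B ≤ f (A ∪ {x}) - f A)
    (hnorm : f ∅ = 0)
    (P : ℕ) (hP : 1 ≤ P)
    (S : ℕ → Finset α)
    (hS0 : S 0 = ∅)
    (hcard : ∀ i ≤ P, (S i).card = i)
    (hchain : ∀ i < P, S i ⊆ S (i + 1))
    (hgreedy : ∀ i < P, ∀ x : α, f (S i ∪ {x}) ≤ f (S (i + 1)))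
    (T : Finset α) (hT : T.card = P) (hfT : 0 ≤ f T) :
    (1 - 1 / Real.exp 1) * f T ≤ f (S P) := by
  have hPpos : (0 : ℝ) < P := by exact_mod_cast hP
  -- step inequality
  have step : ∀ i < P, f T - f (S (i+1)) ≤ (1 - 1/P) * (f T - f (S i)) := by
    intro i hi
    have hdisj : Disjoint (S i) (T \ S i) := Finset.disjoint_sdiff
    have hms := submodular_marginal_sum f hsub (T \ S i) (S i) hdisj
    have hTsub : f T ≤ f (S i ∪ (T \ S i)) := hmono _ _ (by
      intro a ha
      by_cases h : a ∈ S i <;> simp [Finset.mem_union, Finset.mem_sdiff, h, ha])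
    have hgain : ∀ x ∈ T \ S i, f (S i ∪ {x}) - f (S i) ≤ f (S (i+1)) - f (S i) := by
      intro x _; linarith [hgreedy i hi x]
    have hsumle : ∑ x ∈ T \ S i, (f (S i ∪ {x}) - f (S i))
        ≤ (T \ S i).card * (f (S (i+1)) - f (S i)) := by
      calc ∑ x ∈ T \ S i, (f (S i ∪ {x}) - f (S i))
          ≤ ∑ _x ∈ T \ S i, (f (S (i+1)) - f (S i)) := Finset.sum_le_sum hgain
        _ = (T \ S i).card * (f (S (i+1)) - f (S i)) := by
            rw [Finset.sum_const, nsmul_eq_mul]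
    have hmonoS : f (S i) ≤ f (S (i+1)) := hmono _ _ (hchain i hi)
    have hcardle : ((T \ S i).card : ℝ) ≤ P := by
      have : (T \ S i).card ≤ T.card := Finset.card_le_card (Finset.sdiff_subset)
      exact_mod_cast hT ▸ this
    have hcardmul : ((T \ S i).card : ℝ) * (f (S (i+1)) - f (S i))
        ≤ P * (f (S (i+1)) - f (S i)) := by
      apply mul_le_mul_of_nonneg_right hcardle; linarith
    have key : f T - f (S i) ≤ P * (f (S (i+1)) - f (S i)) := by linarith
    have : (1/P : ℝ) * (f T - f (S i)) ≤ f (S (i+1)) - f (S i) := by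
      rw [div_mul_eq_mul_div, one_mul, div_le_iff₀ hPpos]
      linarith [key]
    nlinarith
  have hfrac : (0:ℝ) ≤ 1 - 1/P := by
    have : (1:ℝ)/P ≤ 1 := by
      rw [div_le_one hPpos]; exact_mod_cast hP
    linarith
  -- iterate
  have iter : ∀ i ≤ P, f T - f (S i) ≤ (1 - 1/P)^i * f T := by
    intro i
    induction i with
    | zero => intro _; simp [hS0, hnorm]
    | succ n ih =>
      intro hn
      have hn' : n < P := hn
      have h1 := step n hn'
      have h2 := ih (le_of_lt hn')
      calc f T - f (S (n+1)) ≤ (1 - 1/P) * (f T - f (S n)) := h1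
        _ ≤ (1 - 1/P) * ((1 - 1/P)^n * f T) := by
            exact mul_le_mul_of_nonneg_left h2 hfrac
        _ = (1 - 1/P)^(n+1) * f T := by ring
  have hiter := iter P le_rfl
  -- (1 - 1/P)^P ≤ 1/e
  have hexp : (1 - 1/(P:ℝ))^P ≤ 1 / Real.exp 1 := by
    have h1 : (1 - 1/(P:ℝ)) ≤ Real.exp (-(1/P)) := by
      have := Real.add_one_le_exp (-(1/(P:ℝ)))
      linarith
    have h2 : (1 - 1/(P:ℝ))^P ≤ (Real.exp (-(1/P)))^P :=
      pow_le_pow_left₀ hfrac h1 P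
    have h3 : (Real.exp (-(1/(P:ℝ))))^P = Real.exp (P * (-(1/P))) := by
      rw [← Real.exp_nat_mul]
    have h4 : (P:ℝ) * (-(1/P)) = -1 := by
      field_simp
    rw [h3, h4] at h2
    rw [Real.exp_neg] at h2
    simpa [one_div] using h2
  have hfinal : (1 - 1/(P:ℝ))^P * f T ≤ (1 / Real.exp 1) * f T :=
    mul_le_mul_of_nonneg_right hexp hfT
  linarith
end
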